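/- arXiv:2605.03192 — 4 statements merged into one kernel-verified Lean document; each statement's English description precedes it below -/
import Mathlib

section
/- Let μ γ : ℝ with γ > 0, and let r : ℝ → ℝ be differentiable on [0, ∞) with r′(t) = μ·r(t) − γ·r(t)³ for all t ≥ 0. (i) If μ > 0 and r(0) > 0, then r(t) tends to Real.sqrt (μ/γ) as t → ∞. (ii) If μ ≤ 0, then r(t) tends to 0 as t → ∞ for any initial value r(0). -/
open Set Filter


private lemma hopf_antitoneOn_aux (f f' : ℝ → ℝ)
    (hc : ContinuousOn f (Set.Ici 0))
    (hd : ∀ t ∈ Set.Ioi (0:ℝ), HasDerivAt f (f' t) t)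
    (hn : ∀ t ∈ Set.Ioi (0:ℝ), f' t ≤ 0) :
    AntitoneOn f (Set.Ici 0) := by
  apply antitoneOn_of_deriv_nonpos (convex_Ici 0) hc
  · rw [interior_Ici]
    exact fun t ht => (hd t ht).differentiableAt.differentiableWithinAt
  · rw [interior_Ici]
    intro t ht
    rw [(hd t ht).deriv]
    exact hn t ht


/-- Global attractivity for the Hopf radial equation `ṙ = μ r - γ r³` (γ > 0):
(i) for `μ > 0` every solution with positive initial value tends to the
limit-cycle radius `√(μ/γ)`; (ii) for `μ ≤ 0` every solution tends to `0`. -/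
theorem hopf_radial_equation_long_time_behavior
    (μ γ : ℝ) (hγ : 0 < γ) (r : ℝ → ℝ)
    (hr : ∀ t ∈ Set.Ici (0 : ℝ),
      HasDerivWithinAt r (μ * r t - γ * r t ^ 3) (Set.Ici (0 : ℝ)) t) :
    (0 < μ → 0 < r 0 →
      Filter.Tendsto r Filter.atTop (nhds (Real.sqrt (μ / γ)))) ∧
    (μ ≤ 0 → Filter.Tendsto r Filter.atTop (nhds 0)) := by
  constructor
  · intro hμ hr0
    have hcont : ContinuousOn r (Set.Ici 0) := fun t ht => (hr t ht).continuousWithinAt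
    have hd : ∀ t ∈ Set.Ioi (0:ℝ), HasDerivAt r (μ * r t - γ * r t ^ 3) t :=
      fun t ht => (hr t (mem_Ici.2 (le_of_lt ht))).hasDerivAt (Ici_mem_nhds ht)
    set a := Real.sqrt (μ / γ) with ha
    have ha2 : a ^ 2 = μ / γ := Real.sq_sqrt (le_of_lt (div_pos hμ hγ))
    have hμa : μ = γ * a ^ 2 := by rw [ha2, mul_div_assoc', mul_comm γ μ, mul_div_assoc, div_self hγ.ne', mul_one]
    have hapos : 0 < a := Real.sqrt_pos.2 (div_pos hμ hγ)
    set m := min (r 0) a / 2 with hm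
    have hmpos : 0 < m := by positivity
    have hma : m < a := by
      have : min (r 0) a ≤ a := min_le_right _ _
      simp only [hm]; linarith
    have hm0 : 2 * m ≤ r 0 := by
      have : min (r 0) a ≤ r 0 := min_le_left _ _
      simp only [hm]; linarith
    -- Step 1: the solution stays above m
    have hlow : ∀ t ∈ Set.Ici (0:ℝ), m < r t := by
      by_contra h
      push_neg at h
      set S : Set ℝ := Set.Ici 0 ∩ r ⁻¹' Set.Iic m with hS
      have hSne : S.Nonempty := by
        obtain ⟨t, ht, hrt⟩ := h
        exact ⟨t, ht, hrt⟩
      have hSc : IsClosed S := hcont.preimage_isClosed_of_isClosed isClosed_Ici isClosed_Iic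
      have hSbdd : BddBelow S := ⟨0, fun x hx => hx.1⟩
      set c := sInf S with hc
      have hcS : c ∈ S := hSc.csInf_mem hSne hSbdd
      have hc0 : 0 ≤ c := hcS.1
      have hrcm : r c ≤ m := hcS.2
      have hcpos : 0 < c := by
        rcases lt_or_eq_of_le hc0 with h1 | h1
        · exact h1
        · exfalso; rw [← h1] at hrcm; linarith
      have hnotS : ∀ s ∈ Set.Ioo (0:ℝ) c, m < r s := by
        intro s hs
        by_contra hcon
        push_neg at hcon
        have : s ∈ S := ⟨le_of_lt hs.1, hcon⟩
        exact absurd (csInf_le hSbdd this) (not_le.2 hs.2)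
      -- r c = m by left continuity
      have hflt : (nhdsWithin c (Set.Ioo 0 c)).NeBot := by
        rw [nhdsWithin_Ioo_eq_nhdsLT hcpos]
        infer_instance
      have hrc : r c = m := by
        refine le_antisymm hrcm ?_
        have htend : Tendsto r (nhdsWithin c (Set.Ioo 0 c)) (nhds (r c)) :=
          (hcont c hc0).mono_left (nhdsWithin_mono c (fun s hs => le_of_lt hs.1))
        refine ge_of_tendsto htend ?_
        filter_upwards [self_mem_nhdsWithin] with s hs
        exact le_of_lt (hnotS s hs)
      -- the derivative at c is positive, but slopes from the left are negative
      have hderpos : 0 < μ * r c - γ * r c ^ 3 := by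
        rw [hrc, hμa]
        have h6 : 0 < γ * m * ((a - m) * (a + m)) :=
          mul_pos (mul_pos hγ hmpos) (mul_pos (sub_pos.2 hma) (by linarith))
        nlinarith [h6]
      have hslope := hasDerivWithinAt_iff_tendsto_slope.1 (hr c hc0)
      have hslope' : Tendsto (slope r c) (nhdsWithin c (Set.Ioo 0 c))
          (nhds (μ * r c - γ * r c ^ 3)) :=
        hslope.mono_left (nhdsWithin_mono c (fun s hs => ⟨le_of_lt hs.1, ne_of_lt hs.2⟩))
      have : μ * r c - γ * r c ^ 3 ≤ 0 := by
        refine le_of_tendsto hslope' ?_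
        filter_upwards [self_mem_nhdsWithin] with s hs
        rw [slope_def_field]
        apply div_nonpos_of_nonneg_of_nonpos
        · rw [hrc]; linarith [hnotS s hs]
        · linarith [hs.2]
      linarith
    -- Step 2: Lyapunov function V = (r² - a²)² with exponential decay
    set c := 4 * γ * m ^ 2 with hcdef
    have hcpos : 0 < c := by positivity
    set V : ℝ → ℝ := fun t => (r t ^ 2 - a ^ 2) ^ 2 with hV
    have hVnn : ∀ t, 0 ≤ V t := fun t => sq_nonneg _
    set W : ℝ → ℝ := fun t => V t * Real.exp (c * t) with hW
    have hWd : ∀ t ∈ Set.Ioi (0:ℝ), HasDerivAt W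
        (((2:ℕ) * (r t ^ 2 - a ^ 2) ^ 1 * ((2:ℕ) * r t ^ 1 * (μ * r t - γ * r t ^ 3)))
          * Real.exp (c * t) + V t * (Real.exp (c * t) * c)) t := by
      intro t ht
      have h1 : HasDerivAt (fun t => r t ^ 2 - a ^ 2)
          ((2:ℕ) * r t ^ 1 * (μ * r t - γ * r t ^ 3)) t := ((hd t ht).pow 2).sub_const _
      have h2 := h1.pow 2
      have h3 : HasDerivAt (fun t => Real.exp (c * t)) (Real.exp (c * t) * c) t := by
        simpa using ((hasDerivAt_id t).const_mul c).exp
      exact h2.mul h3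
    have hWc : ContinuousOn W (Set.Ici 0) :=
      (((hcont.pow 2).sub continuousOn_const).pow 2).mul
        (Real.continuous_exp.comp (continuous_const.mul continuous_id)).continuousOn
    have hWanti : AntitoneOn W (Set.Ici 0) := by
      refine hopf_antitoneOn_aux W _ hWc hWd (fun t ht => ?_)
      have hrm : m < r t := hlow t (mem_Ici.2 (le_of_lt ht))
      have hkey : ((2:ℝ) * (r t ^ 2 - a ^ 2) ^ 1 * (2 * r t ^ 1 * (μ * r t - γ * r t ^ 3)))
          * Real.exp (c * t) + V t * (Real.exp (c * t) * c)
          = -(4 * γ) * (Real.exp (c * t) * ((r t ^ 2 - a ^ 2) ^ 2 * (r t ^ 2 - m ^ 2))) := by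
        simp only [hV, hμa, hcdef]; ring
      push_cast
      rw [hkey]
      have hx : 0 ≤ Real.exp (c * t) * ((r t ^ 2 - a ^ 2) ^ 2 * (r t ^ 2 - m ^ 2)) := by
        apply mul_nonneg (Real.exp_pos _).le
        apply mul_nonneg (sq_nonneg _)
        nlinarith
      nlinarith
    -- V t ≤ V 0 * exp (-(c t)) → 0
    have hVbound : ∀ t ∈ Set.Ici (0:ℝ), V t ≤ V 0 / Real.exp (c * t) := by
      intro t ht
      have h1 : W t ≤ W 0 := hWanti self_mem_Ici ht ht
      have h2 : V t * Real.exp (c * t) ≤ V 0 := by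
        simpa [hW] using h1
      exact (le_div_iff₀ (Real.exp_pos _)).2 h2
    have hVtend : Tendsto V atTop (nhds 0) := by
      have hub : Tendsto (fun t => V 0 / Real.exp (c * t)) atTop (nhds 0) :=
        Tendsto.div_atTop tendsto_const_nhds
          (Real.tendsto_exp_atTop.comp (Tendsto.const_mul_atTop hcpos tendsto_id))
      refine tendsto_of_tendsto_of_tendsto_of_le_of_le' tendsto_const_nhds hub ?_ ?_
      · exact Eventually.of_forall hVnn
      · filter_upwards [eventually_ge_atTop (0:ℝ)] with t ht
        exact hVbound t ht
    -- conclude r² → a² and r → a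
    have hsq : Tendsto (fun t => r t ^ 2) atTop (nhds (a ^ 2)) := by
      have h1 : Tendsto (fun t => Real.sqrt (V t)) atTop (nhds 0) :=
        (Real.continuous_sqrt.tendsto' 0 0 Real.sqrt_zero).comp hVtend
      have h2 : Tendsto (fun t => |r t ^ 2 - a ^ 2|) atTop (nhds 0) := by
        refine h1.congr (fun t => ?_)
        exact Real.sqrt_sq_eq_abs _
      have h3 : Tendsto (fun t => r t ^ 2 - a ^ 2) atTop (nhds 0) :=
        (tendsto_zero_iff_abs_tendsto_zero _).2 h2
      have := h3.add_const (a ^ 2)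
      simpa using this
    have h4 : Tendsto (fun t => Real.sqrt (r t ^ 2)) atTop (nhds a) := by
      have := (Real.continuous_sqrt.tendsto' (a ^ 2) a (by
        rw [Real.sqrt_sq hapos.le])).comp hsq
      exact this
    refine h4.congr' ?_
    filter_upwards [eventually_ge_atTop (0:ℝ)] with t ht
    exact Real.sqrt_sq (le_of_lt (lt_trans hmpos (hlow t ht)))

  · intro hμ
    have hcont : ContinuousOn r (Set.Ici 0) := fun t ht => (hr t ht).continuousWithinAt
    have hd : ∀ t ∈ Set.Ioi (0:ℝ), HasDerivAt r (μ * r t - γ * r t ^ 3) t :=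
      fun t ht => (hr t (mem_Ici.2 (le_of_lt ht))).hasDerivAt (Ici_mem_nhds ht)
    set V : ℝ → ℝ := fun t => r t ^ 2 with hV
    have hVd : ∀ t ∈ Set.Ioi (0:ℝ),
        HasDerivAt V ((2:ℕ) * r t ^ 1 * (μ * r t - γ * r t ^ 3)) t :=
      fun t ht => (hd t ht).pow 2
    have hVc : ContinuousOn V (Set.Ici 0) := hcont.pow 2
    have hVnn : ∀ t, 0 ≤ V t := fun t => sq_nonneg _
    have hVanti : AntitoneOn V (Set.Ici 0) := by
      refine hopf_antitoneOn_aux V _ hVc hVd (fun t ht => ?_)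
      push_cast
      nlinarith [mul_nonneg (neg_nonneg.2 hμ) (sq_nonneg (r t)),
        mul_nonneg hγ.le (sq_nonneg (r t ^ 2))]
    set L := sInf (V '' Set.Ici 0) with hLdef
    have hne : (V '' Set.Ici 0).Nonempty := ⟨V 0, mem_image_of_mem _ self_mem_Ici⟩
    have hbdd : BddBelow (V '' Set.Ici 0) := ⟨0, by rintro y ⟨t, -, rfl⟩; exact hVnn t⟩
    have hLle : ∀ t, 0 ≤ t → L ≤ V t := fun t ht => csInf_le hbdd (mem_image_of_mem _ ht)
    have hL0 : 0 ≤ L := le_csInf hne (by rintro y ⟨t, -, rfl⟩; exact hVnn t)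
    have hL : L = 0 := by
      by_contra h
      have hLpos : 0 < L := lt_of_le_of_ne hL0 (Ne.symm h)
      set c := 2 * γ * L ^ 2 with hc
      have hcpos : 0 < c := by positivity
      set W : ℝ → ℝ := fun t => V t + c * t with hW
      have hWanti : AntitoneOn W (Set.Ici 0) := by
        refine hopf_antitoneOn_aux W
            (fun t => (2:ℕ) * r t ^ 1 * (μ * r t - γ * r t ^ 3) + c * 1)
            (hVc.add (continuousOn_const.mul continuousOn_id))
            (fun t ht => (hVd t ht).add ((hasDerivAt_id t).const_mul c))
            (fun t ht => ?_)
        have h1 : L ≤ r t ^ 2 := hLle t (le_of_lt ht)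
        have h2 : L ^ 2 ≤ (r t ^ 2) ^ 2 := by nlinarith
        have h3 : γ * L ^ 2 ≤ γ * (r t ^ 2) ^ 2 := mul_le_mul_of_nonneg_left h2 hγ.le
        simp only [hc]
        push_cast
        nlinarith [mul_nonneg (neg_nonneg.2 hμ) (sq_nonneg (r t))]
      set T := V 0 / c + 1 with hT
      have hT0 : (0:ℝ) ≤ T := by positivity
      have hWT : W T ≤ W 0 := hWanti self_mem_Ici hT0 hT0
      have hcT : c * T = V 0 + c := by rw [hT, mul_add, mul_div_assoc', mul_comm c (V 0), mul_div_assoc, div_self hcpos.ne', mul_one, mul_one]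
      have h5 : V T + c * T ≤ V 0 + c * 0 := hWT
      rw [hcT] at h5
      nlinarith [hVnn T, hcpos]
    have hVtend : Tendsto V atTop (nhds 0) := by
      rw [Metric.tendsto_atTop]
      intro ε hε
      have : L < ε := by rw [hL]; exact hε
      obtain ⟨y, ⟨t₀, ht₀, rfl⟩, hy⟩ := exists_lt_of_csInf_lt hne this
      refine ⟨t₀, fun t ht => ?_⟩
      have h1 : V t ≤ V t₀ := hVanti ht₀ (le_trans ht₀ ht) ht
      rw [Real.dist_eq, abs_of_nonneg (by linarith [hVnn t])]
      · linarith
    have habs : Tendsto (fun t => |r t|) atTop (nhds 0) := by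
      have h1 : Tendsto (fun t => Real.sqrt (V t)) atTop (nhds 0) :=
        (Real.continuous_sqrt.tendsto' 0 0 Real.sqrt_zero).comp hVtend
      refine h1.congr (fun t => ?_)
      exact Real.sqrt_sq_eq_abs (r t)
    exact (tendsto_zero_iff_abs_tendsto_zero r).2 habs
end

section
/- Let m and k be finite types, and let S : ℝ → Matrix (m ⊕ k) (m ⊕ k) ℝ be continuous such that for every t the lower-left block of S(t) vanishes, i.e. S(t) = Matrix.fromBlocks (A t) (B t) 0 (D t) for some A t : Matrix m m ℝ, B t : Matrix m k ℝ, D t : Matrix k k ℝ. Let Φ : ℝ → Matrix (m ⊕ k) (m ⊕ k) ℝ be differentiable with Φ(0) = 1 (the identity matrix) and Φ′(t) = S(t) * Φ(t) for all t. Then for every t the lower-left block of Φ(t) vanishes: (Φ t).toBlocks₂₁ = 0. In particular, the time-ordered exponential (fundamental matrix) of a block-upper-triangular generator is block upper triangular, and hence its spectrum is the union of the spectra of its two diagonal blocks. -/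
open Matrix Set

lemma spectrum_of_toBlocks₂₁_eq_zero
    {m k : Type*} [Fintype m] [Fintype k] [DecidableEq m] [DecidableEq k]
    (M : Matrix (m ⊕ k) (m ⊕ k) ℝ) (h : M.toBlocks₂₁ = 0) :
    spectrum ℝ M = spectrum ℝ M.toBlocks₁₁ ∪ spectrum ℝ M.toBlocks₂₂ := by
  ext μ
  have hM : M = fromBlocks M.toBlocks₁₁ M.toBlocks₁₂ 0 M.toBlocks₂₂ := by
    rw [← h, fromBlocks_toBlocks]
  have key : algebraMap ℝ (Matrix (m ⊕ k) (m ⊕ k) ℝ) μ - M =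
      fromBlocks (algebraMap ℝ (Matrix m m ℝ) μ - M.toBlocks₁₁) (-M.toBlocks₁₂) 0
        (algebraMap ℝ (Matrix k k ℝ) μ - M.toBlocks₂₂) := by
    rw [hM]
    ext (i | i) (j | j) <;>
      simp [Matrix.algebraMap_eq_diagonal, Matrix.diagonal_apply, Matrix.sub_apply,
        Matrix.toBlocks₁₁, Matrix.toBlocks₁₂, Matrix.toBlocks₂₂, Sum.inl.injEq, Sum.inr.injEq]
  simp only [spectrum.mem_iff, Set.mem_union, Matrix.isUnit_iff_isUnit_det, key,
    det_fromBlocks_zero₂₁, isUnit_iff_ne_zero, mul_ne_zero_iff]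
  tauto



/-- The fundamental matrix of a block-upper-triangular time-dependent linear
system is block upper triangular, and its spectrum is the union of the spectra
of its diagonal blocks. -/
theorem fundamental_matrix_of_block_upper_triangular_generator
    {m k : Type*} [Fintype m] [Fintype k] [DecidableEq m] [DecidableEq k]
    (S : ℝ → Matrix (m ⊕ k) (m ⊕ k) ℝ) (hScont : Continuous S)
    (hSblock : ∀ t, ∃ (A : Matrix m m ℝ) (B : Matrix m k ℝ) (D : Matrix k k ℝ),
      S t = Matrix.fromBlocks A B 0 D)
    (Φ : ℝ → Matrix (m ⊕ k) (m ⊕ k) ℝ) (hΦ0 : Φ 0 = 1)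
    (hΦ : ∀ t i j, HasDerivAt (fun u => Φ u i j) ((S t * Φ t) i j) t) :
    ∀ t, (Φ t).toBlocks₂₁ = 0 ∧
      spectrum ℝ (Φ t) =
        spectrum ℝ ((Φ t).toBlocks₁₁) ∪ spectrum ℝ ((Φ t).toBlocks₂₂) := by
  -- the lower-left block vanishes at every time
  have hS21 : ∀ t (i : k) (j : m), S t (Sum.inr i) (Sum.inl j) = 0 := by
    intro t i j
    obtain ⟨A, B, D, hABD⟩ := hSblock t
    rw [hABD]; rfl
  have main : ∀ T, (Φ T).toBlocks₂₁ = 0 := by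
    intro T
    set a : ℝ := -(|T| + 1) with ha_def
    set b : ℝ := |T| + 1 with hb_def
    have hab0 : (0 : ℝ) ∈ Ioo a b := by
      have := abs_nonneg T
      constructor <;> simp only [ha_def, hb_def] <;> linarith
    -- clamping function
    set c : ℝ → ℝ := fun u => max a (min b u) with hc_def
    have hc_mem : ∀ u, c u ∈ Icc a b := by
      intro u
      refine ⟨le_max_left _ _, max_le (le_of_lt (lt_of_lt_of_le hab0.1 hab0.2.le))
        (min_le_left _ _)⟩
    have hc_id : ∀ u ∈ Icc a b, c u = u := by
      intro u hu
      simp only [hc_def]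
      rw [min_eq_right hu.2, max_eq_right hu.1]
    -- the bound on the lower-right block of S on [a, b]
    set h : ℝ → ℝ := fun u => ∑ i : k, ∑ l : k, |S u (Sum.inr i) (Sum.inr l)| with hh_def
    have hhcont : Continuous h := by
      apply continuous_finset_sum
      intro i _
      apply continuous_finset_sum
      intro l _
      exact (hScont.matrix_elem _ _).abs
    obtain ⟨u₀, hu₀mem, hu₀max⟩ :=
      isCompact_Icc.exists_isMaxOn ⟨0, Ioo_subset_Icc_self hab0⟩ hhcont.continuousOn
    set M : ℝ := h u₀ with hM_def
    have hM0 : 0 ≤ M := by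
      simp only [hM_def, hh_def]
      positivity
    have hbound : ∀ u (i l : k), |S (c u) (Sum.inr i) (Sum.inr l)| ≤ M := by
      intro u i l
      have h1 : |S (c u) (Sum.inr i) (Sum.inr l)| ≤ h (c u) := by
        simp only [hh_def]
        calc |S (c u) (Sum.inr i) (Sum.inr l)|
            ≤ ∑ l' : k, |S (c u) (Sum.inr i) (Sum.inr l')| :=
              Finset.single_le_sum (f := fun l' => |S (c u) (Sum.inr i) (Sum.inr l')|)
                (fun l' _ => abs_nonneg _) (Finset.mem_univ l)
          _ ≤ _ := Finset.single_le_sum (f := fun i' => ∑ l' : k, |S (c u) (Sum.inr i') (Sum.inr l')|)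
              (fun i' _ => Finset.sum_nonneg fun _ _ => abs_nonneg _) (Finset.mem_univ i)
      exact h1.trans (hu₀max (hc_mem u))
    -- the vector field
    set v : ℝ → (k → m → ℝ) → (k → m → ℝ) :=
      fun u y i j => ∑ l : k, S (c u) (Sum.inr i) (Sum.inr l) * y l j with hv_def
    set K : NNReal := ⟨(Fintype.card k : ℝ) * M, by positivity⟩ with hK_def
    have hlip : ∀ u, LipschitzOnWith K (v u) univ := by
      intro u
      rw [lipschitzOnWith_univ]
      apply LipschitzWith.of_dist_le_mul
      intro y y'
      have hKnn : (0 : ℝ) ≤ (Fintype.card k : ℝ) * M := by positivity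
      rw [dist_pi_le_iff (by positivity)]
      intro i
      rw [dist_pi_le_iff (by positivity)]
      intro j
      rw [Real.dist_eq]
      calc |v u y i j - v u y' i j|
          = |∑ l : k, S (c u) (Sum.inr i) (Sum.inr l) * (y l j - y' l j)| := by
            simp only [hv_def, ← Finset.sum_sub_distrib, mul_sub]
        _ ≤ ∑ l : k, |S (c u) (Sum.inr i) (Sum.inr l) * (y l j - y' l j)| :=
            Finset.abs_sum_le_sum_abs _ _
        _ ≤ ∑ l : k, M * dist y y' := by
            apply Finset.sum_le_sum
            intro l _
            rw [abs_mul]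
            have h1 : |y l j - y' l j| ≤ dist y y' := by
              rw [← Real.dist_eq]
              exact (dist_le_pi_dist (y l) (y' l) j).trans (dist_le_pi_dist y y' l)
            exact mul_le_mul (hbound u i l) h1 (abs_nonneg _) hM0
        _ = (Fintype.card k : ℝ) * M * dist y y' := by
            rw [Finset.sum_const, Finset.card_univ, nsmul_eq_mul]; ring
    -- the two solutions
    set f : ℝ → (k → m → ℝ) := fun t i j => Φ t (Sum.inr i) (Sum.inl j) with hf_def
    have hfderiv : ∀ t ∈ Ioo a b, HasDerivAt f (v t (f t)) t := by
      intro t ht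
      rw [hasDerivAt_pi]
      intro i
      rw [hasDerivAt_pi]
      intro j
      have := hΦ t (Sum.inr i) (Sum.inl j)
      refine this.congr_deriv (Eq.symm ?_)
      simp only [hv_def, hf_def, Matrix.mul_apply, Fintype.sum_sum_type]
      rw [hc_id t (Ioo_subset_Icc_self ht)]
      simp [hS21 t]
    have hgderiv : ∀ t ∈ Ioo a b, HasDerivAt (fun _ : ℝ => (0 : k → m → ℝ)) (v t 0) t := by
      intro t ht
      have : v t 0 = 0 := by
        funext i j
        simp [hv_def]
      rw [this]
      exact hasDerivAt_const _ _
    have hfcont : Continuous f := by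
      apply continuous_pi; intro i; apply continuous_pi; intro j
      rw [continuous_iff_continuousAt]
      intro t
      exact (hΦ t (Sum.inr i) (Sum.inl j)).continuousAt
    have heq0 : f 0 = (fun _ _ => 0 : k → m → ℝ) := by
      funext i j
      simp [hf_def, hΦ0, Matrix.one_apply]
    have huniq := ODE_solution_unique_of_mem_Icc (fun u _ => hlip u) hab0 hfcont.continuousOn hfderiv
      (fun _ _ => mem_univ _) continuousOn_const hgderiv (fun _ _ => mem_univ _) heq0
    have hT : T ∈ Icc a b := by
      constructor
      · simp only [ha_def]
        have := neg_abs_le T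
        linarith
      · have := le_abs_self T
        simp only [hb_def]; linarith
    have := huniq hT
    ext i j
    exact congrFun (congrFun this i) j
  intro t
  exact ⟨main t, spectrum_of_toBlocks₂₁_eq_zero _ (main t)⟩
end

section
/- Let ℛ, 𝒮, 𝒮c be finite sets; let k₊ k₋ : ℛ → ℝ with k₊(ρ) > 0 and k₋(ρ) > 0 for all ρ; let a : 𝒮c → ℝ with a(ℓ′) > 0 for all ℓ′; let x : 𝒮 → ℝ with x(ℓ) > 0 for all ℓ; and let ∇₊ ∇₋ : ℛ → 𝒮 → ℕ and ∇₊ᶜ ∇₋ᶜ : ℛ → 𝒮c → ℕ be stoichiometric coefficients. Define the mass-action fluxes J₊(ρ) = k₊(ρ) · (∏_{ℓ′∈𝒮c} a(ℓ′)^{∇₊ᶜ(ρ,ℓ′)}) · (∏_{ℓ∈𝒮} x(ℓ)^{∇₊(ρ,ℓ)}) and J₋(ρ) = k₋(ρ) · (∏_{ℓ′∈𝒮c} a(ℓ′)^{∇₋ᶜ(ρ,ℓ′)}) · (∏_{ℓ∈𝒮} x(ℓ)^{∇₋(ρ,ℓ)}), and the entropy increments μ(ρ) = Real.log (k₊(ρ)/k₋(ρ))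 + Σ_{ℓ′∈𝒮c} ((∇₊ᶜ(ρ,ℓ′) : ℝ) − (∇₋ᶜ(ρ,ℓ′) : ℝ)) · Real.log (a(ℓ′)). Then Σ_{ρ∈ℛ} μ(ρ) · (J₊(ρ) − J₋(ρ)) = Σ_{ρ∈ℛ} (J₊(ρ) − J₋(ρ)) · Real.log (J₊(ρ)/J₋(ρ)) + Σ_{ℓ∈𝒮} (Σ_{ρ∈ℛ} ((∇₋(ρ,ℓ) : ℝ) − (∇₊(ρ,ℓ) : ℝ)) · (J₊(ρ) − J₋(ρ))) · Real.log (x(ℓ)). -/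
/-- Decomposition of the environment entropy production rate of a mass-action
reversible chemical reaction network: `σ = σ_m + Σ_ℓ ẋ_ℓ ln x_ℓ`, i.e.
`Σ_ρ μ_ρ (J₊ρ - J₋ρ) = Σ_ρ (J₊ρ - J₋ρ) ln(J₊ρ/J₋ρ)
  + Σ_ℓ (Σ_ρ (∇₋ - ∇₊)(J₊ρ - J₋ρ)) ln x_ℓ`. -/
theorem entropy_production_micro_macro_decomposition
    {R S Sc : Type*} [Fintype R] [Fintype S] [Fintype Sc]
    (kp km : R → ℝ) (hkp : ∀ ρ, 0 < kp ρ) (hkm : ∀ ρ, 0 < km ρ)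
    (a : Sc → ℝ) (ha : ∀ ℓ', 0 < a ℓ')
    (x : S → ℝ) (hx : ∀ ℓ, 0 < x ℓ)
    (np nm : R → S → ℕ) (npc nmc : R → Sc → ℕ)
    (Jp Jm μ : R → ℝ)
    (hJp : ∀ ρ, Jp ρ =
      kp ρ * (∏ ℓ', a ℓ' ^ npc ρ ℓ') * (∏ ℓ, x ℓ ^ np ρ ℓ))
    (hJm : ∀ ρ, Jm ρ =
      km ρ * (∏ ℓ', a ℓ' ^ nmc ρ ℓ') * (∏ ℓ, x ℓ ^ nm ρ ℓ))
    (hμ : ∀ ρ, μ ρ = Real.log (kp ρ / km ρ) +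
      ∑ ℓ', ((npc ρ ℓ' : ℝ) - (nmc ρ ℓ' : ℝ)) * Real.log (a ℓ')) :
    ∑ ρ, μ ρ * (Jp ρ - Jm ρ) =
      (∑ ρ, (Jp ρ - Jm ρ) * Real.log (Jp ρ / Jm ρ)) +
      ∑ ℓ, (∑ ρ, ((nm ρ ℓ : ℝ) - (np ρ ℓ : ℝ)) * (Jp ρ - Jm ρ)) *
        Real.log (x ℓ) := by
  have logJ : ∀ ρ, Real.log (Jp ρ / Jm ρ) = μ ρ +
      ∑ ℓ, ((np ρ ℓ : ℝ) - (nm ρ ℓ : ℝ)) * Real.log (x ℓ) := by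
    intro ρ
    have hap : ∀ ℓ', (0:ℝ) < a ℓ' ^ npc ρ ℓ' := fun ℓ' => pow_pos (ha ℓ') _
    have ham : ∀ ℓ', (0:ℝ) < a ℓ' ^ nmc ρ ℓ' := fun ℓ' => pow_pos (ha ℓ') _
    have hxp : ∀ ℓ, (0:ℝ) < x ℓ ^ np ρ ℓ := fun ℓ => pow_pos (hx ℓ) _
    have hxm : ∀ ℓ, (0:ℝ) < x ℓ ^ nm ρ ℓ := fun ℓ => pow_pos (hx ℓ) _
    have pap : (0:ℝ) < ∏ ℓ', a ℓ' ^ npc ρ ℓ' := Finset.prod_pos fun ℓ' _ => hap ℓ'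
    have pam : (0:ℝ) < ∏ ℓ', a ℓ' ^ nmc ρ ℓ' := Finset.prod_pos fun ℓ' _ => ham ℓ'
    have pxp : (0:ℝ) < ∏ ℓ, x ℓ ^ np ρ ℓ := Finset.prod_pos fun ℓ _ => hxp ℓ
    have pxm : (0:ℝ) < ∏ ℓ, x ℓ ^ nm ρ ℓ := Finset.prod_pos fun ℓ _ => hxm ℓ
    rw [hJp ρ, hJm ρ, hμ ρ,
      Real.log_div (mul_ne_zero (mul_ne_zero (hkp ρ).ne' pap.ne') pxp.ne')
        (mul_ne_zero (mul_ne_zero (hkm ρ).ne' pam.ne') pxm.ne'),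
      Real.log_mul (mul_ne_zero (hkp ρ).ne' pap.ne') pxp.ne',
      Real.log_mul (mul_ne_zero (hkm ρ).ne' pam.ne') pxm.ne',
      Real.log_mul (hkp ρ).ne' pap.ne',
      Real.log_mul (hkm ρ).ne' pam.ne',
      Real.log_div (hkp ρ).ne' (hkm ρ).ne',
      Real.log_prod (fun ℓ' _ => (hap ℓ').ne'),
      Real.log_prod (fun ℓ' _ => (ham ℓ').ne'),
      Real.log_prod (fun ℓ _ => (hxp ℓ).ne'),
      Real.log_prod (fun ℓ _ => (hxm ℓ).ne')]
    simp only [Real.log_pow, sub_mul, Finset.sum_sub_distrib]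
    ring
  have step : ∀ ρ, μ ρ * (Jp ρ - Jm ρ) =
      (Jp ρ - Jm ρ) * Real.log (Jp ρ / Jm ρ) +
      ∑ ℓ, ((nm ρ ℓ : ℝ) - (np ρ ℓ : ℝ)) * (Jp ρ - Jm ρ) * Real.log (x ℓ) := by
    intro ρ
    rw [logJ ρ, mul_add, Finset.mul_sum, add_assoc, ← Finset.sum_add_distrib,
      Finset.sum_eq_zero (fun ℓ _ => by ring), add_zero, mul_comm]
  calc ∑ ρ, μ ρ * (Jp ρ - Jm ρ)
      = ∑ ρ, ((Jp ρ - Jm ρ) * Real.log (Jp ρ / Jm ρ) +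
        ∑ ℓ, ((nm ρ ℓ : ℝ) - (np ρ ℓ : ℝ)) * (Jp ρ - Jm ρ) * Real.log (x ℓ)) := by
        exact Finset.sum_congr rfl fun ρ _ => step ρ
    _ = (∑ ρ, (Jp ρ - Jm ρ) * Real.log (Jp ρ / Jm ρ)) +
        ∑ ℓ, (∑ ρ, ((nm ρ ℓ : ℝ) - (np ρ ℓ : ℝ)) * (Jp ρ - Jm ρ)) * Real.log (x ℓ) := by
        rw [Finset.sum_add_distrib, Finset.sum_comm]
        simp [Finset.sum_mul]
end

section
/- Let θc α β : ℝ with α ≥ 0 and β ≥ 0, and let V R r i : ℝ → ℝ. Suppose there exist δ > 0, M > 0, C > 0, c > 0 such that for all θ with 0 < θ − θc < δ: (R(θ) − r(θ))² ≤ i(θ) · V(θ); |r(θ)| ≤ M; 0 ≤ i(θ) ≤ M; 0 ≤ V(θ) ≤ C · (θ − θc)^{−α}; and |R(θ)| ≥ c · (θ − θc)^{−β}. Then α ≥ 2β. In particular, if the response R diverges at θc with exponent β > 0, then the fluctuation V must diverge with exponent α ≥ 2β > 0, while the converse need not hold. -/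
/-- Universal scaling inequality `α ≥ 2β` between the divergence exponent `α`
of the entropy-production fluctuation `V` and the exponent `β` of the
parametric response `R`, given the Cramér–Rao-type bound
`(R - r)² ≤ i · V` with bounded `r` and `i` near the critical point `θc`. -/
theorem universal_exponent_inequality
    (θc α β : ℝ) (hα : 0 ≤ α) (hβ : 0 ≤ β) (V R r i : ℝ → ℝ)
    (h : ∃ δ > (0 : ℝ), ∃ M > (0 : ℝ), ∃ C > (0 : ℝ), ∃ c > (0 : ℝ),
      ∀ θ : ℝ, 0 < θ - θc → θ - θc < δ →
        (R θ - r θ) ^ 2 ≤ i θ * V θ ∧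
        |r θ| ≤ M ∧
        0 ≤ i θ ∧ i θ ≤ M ∧
        0 ≤ V θ ∧ V θ ≤ C * (θ - θc) ^ (-α) ∧
        c * (θ - θc) ^ (-β) ≤ |R θ|) :
    2 * β ≤ α := by
  by_contra hlt
  push_neg at hlt
  obtain ⟨δ, hδ, M, hM, C, hC, c, hc, H⟩ := h
  have hβ0 : 0 < β := by linarith
  set ε : ℝ := 2 * β - α with hεdef
  have hε : 0 < ε := by simp only [hεdef]; linarith
  have hbase1 : (0:ℝ) ≤ 2 * M / c := by positivity
  have hbase2 : (0:ℝ) ≤ 4 * M * C / c ^ 2 + 1 := by positivity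
  set A : ℝ := max 1 (max ((2*M/c) ^ β⁻¹) (max ((4*M*C/c^2 + 1) ^ ε⁻¹) (2/δ)))
    with hAdef
  have hA1 : (1:ℝ) ≤ A := le_max_left _ _
  have hA0 : (0:ℝ) < A := lt_of_lt_of_le one_pos hA1
  have ht0 : 0 < A⁻¹ := inv_pos.mpr hA0
  set θ := θc + A⁻¹ with hθdef
  have hsub : θ - θc = A⁻¹ := by rw [hθdef]; ring
  have hAδ : 2/δ ≤ A :=
    le_trans (le_trans (le_max_right _ _) (le_max_right _ _)) (le_max_right _ _)
  have htδ : θ - θc < δ := by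
    rw [hsub]
    have h2δ : (0:ℝ) < 2/δ := by positivity
    have : A⁻¹ ≤ (2/δ)⁻¹ := inv_anti₀ h2δ hAδ
    have hδ2 : (2/δ)⁻¹ = δ/2 := by field_simp
    rw [hδ2] at this
    linarith
  have hpos : 0 < θ - θc := by rw [hsub]; exact ht0
  obtain ⟨hCR, hr, hi0, hiM, hV0, hVC, hR⟩ := H θ hpos htδ
  -- rewrite rpow of A⁻¹
  have hkey : ∀ x : ℝ, (A⁻¹ : ℝ) ^ (-x) = A ^ x := by
    intro x
    rw [Real.inv_rpow hA0.le, Real.rpow_neg hA0.le, inv_inv]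
  rw [hsub, hkey] at hVC hR
  -- A^β ≥ 2M/c
  have hAβ : 2*M/c ≤ A ^ β := by
    have h1 : (2*M/c) ^ β⁻¹ ≤ A :=
      le_trans (le_max_left _ _) (le_max_right _ _)
    have h2 : ((2*M/c) ^ β⁻¹) ^ β ≤ A ^ β :=
      Real.rpow_le_rpow (Real.rpow_nonneg hbase1 _) h1 hβ0.le
    rwa [← Real.rpow_mul hbase1, inv_mul_cancel₀ hβ0.ne', Real.rpow_one] at h2
  have hAε : 4*M*C/c^2 + 1 ≤ A ^ ε := by
    have h1 : (4*M*C/c^2 + 1) ^ ε⁻¹ ≤ A :=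
      le_trans (le_trans (le_max_left _ _) (le_max_right _ _)) (le_max_right _ _)
    have h2 : ((4*M*C/c^2 + 1) ^ ε⁻¹) ^ ε ≤ A ^ ε :=
      Real.rpow_le_rpow (Real.rpow_nonneg hbase2 _) h1 hε.le
    rwa [← Real.rpow_mul hbase2, inv_mul_cancel₀ hε.ne', Real.rpow_one] at h2
  -- lower bound on |R - r|
  have hMc : 2*M ≤ c * A ^ β := by
    have := mul_le_mul_of_nonneg_left hAβ hc.le
    rwa [mul_div_cancel₀ _ hc.ne'] at this
  have habs : c * A ^ β - M ≤ |R θ - r θ| := by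
    have h1 : |R θ| - |r θ| ≤ |R θ - r θ| := abs_sub_abs_le_abs_sub _ _
    linarith
  have hhalf : c * A ^ β / 2 ≤ |R θ - r θ| := by linarith
  have hhalf0 : 0 ≤ c * A ^ β / 2 := by positivity
  have hsq : (c * A ^ β / 2) ^ 2 ≤ (R θ - r θ) ^ 2 := by
    rw [← sq_abs (R θ - r θ)]
    exact pow_le_pow_left₀ hhalf0 hhalf 2
  -- upper bound
  have hup : (R θ - r θ) ^ 2 ≤ M * (C * A ^ α) := by
    calc (R θ - r θ) ^ 2 ≤ i θ * V θ := hCR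
      _ ≤ M * (C * A ^ α) := mul_le_mul hiM hVC hV0 hM.le
  -- A^(2β) = A^α * A^ε
  have hsplit : A ^ β * A ^ β = A ^ α * A ^ ε := by
    rw [← Real.rpow_add hA0, ← Real.rpow_add hA0]
    ring_nf
    rw [hεdef]; ring_nf
  have hAα : (0:ℝ) < A ^ α := Real.rpow_pos_of_pos hA0 _
  have hlow : (c * A ^ β / 2) ^ 2 = c ^ 2 / 4 * (A ^ β * A ^ β) := by ring
  rw [hlow, hsplit] at hsq
  have hfinal : c ^ 2 / 4 * (A ^ α * (4*M*C/c^2 + 1)) ≤ c ^ 2 / 4 * (A ^ α * A ^ ε) := by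
    have := mul_le_mul_of_nonneg_left hAε hAα.le
    nlinarith
  have hexpand : c ^ 2 / 4 * (A ^ α * (4*M*C/c^2 + 1)) = M * (C * A ^ α) + c^2/4 * A ^ α := by
    field_simp
  rw [hexpand] at hfinal
  have hAc : 0 < c ^ 2 / 4 * A ^ α := by positivity
  linarith
end
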